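/- arXiv:1307.5013 — 2 statements merged into one kernel-verified Lean document; each statement's English description precedes it below -/
import Mathlib

section
/- Let 0 < b < a and A ≥ 0 be real numbers. There exists a constant C = C(A,a,b) such that: for every r₀ > 0, every B ≥ 0, and every nonnegative nondecreasing function Φ on (0,r₀] satisfying Φ(ρ) ≤ A (ρ/r)^a Φ(r) + B r^b for all 0 < ρ < r ≤ r₀, one has Φ(r) ≤ C r^b ( r₀^{-b} Φ(r₀) + B ) for all r ∈ (0, r₀). -/
/-!
Fix a scale `τ ∈ (0, 1)` so small that `A τ^a ≤ τ^b / 2`, possible since `a > b`. Along the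
geometric radii `τ^k r₀` the decay hypothesis becomes the recursion
`Φ(τ^{k+1} r₀) ≤ (τ^b / 2) Φ(τ^k r₀) + B r₀^b (τ^b)^k`, whose solutions are `O((τ^b)^k)`.
A general radius `r` lies between two consecutive `τ^{k+1} r₀ < r ≤ τ^k r₀`, and monotonicity
of `Φ` transfers the bound at `τ^k r₀` to `r` at the cost of one more factor `τ^{-b}`.
-/

open Real Filter Topology Set

lemma exists_pos_lt_one_mul_rpow_le (A : ℝ) {ε c : ℝ} (hε : 0 < ε) (hc : 0 < c) :
    ∃ τ, 0 < τ ∧ τ < 1 ∧ A * τ ^ ε ≤ c := by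
  have hlim : Tendsto (fun τ : ℝ => A * τ ^ ε) (𝓝[>] 0) (𝓝 0) := by
    simpa [zero_rpow hε.ne'] using
      ((continuousAt_rpow_const 0 ε (Or.inr hε.le)).tendsto.const_mul A).mono_left
        nhdsWithin_le_nhds
  obtain ⟨τ, hτc, hτ⟩ :=
    ((hlim.eventually (ge_mem_nhds hc)).and (Ioo_mem_nhdsGT one_pos)).exists
  exact ⟨τ, hτ.1, hτ.2, hτc⟩

lemma le_mul_pow_of_le_half_mul_add {x : ℕ → ℝ} {q D : ℝ} (hq : 0 < q) (hx₀ : 0 ≤ x 0)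
    (hD : 0 ≤ D) (h : ∀ k, x (k + 1) ≤ q / 2 * x k + D * q ^ k) (k : ℕ) :
    x k ≤ (x 0 + 2 * D / q) * q ^ k := by
  induction k with
  | zero => simp only [pow_zero, mul_one, le_add_iff_nonneg_right]; positivity
  | succ k ih =>
    have hsplit : (x 0 + 2 * D / q) * q ^ (k + 1)
        = q / 2 * ((x 0 + 2 * D / q) * q ^ k) + D * q ^ k + x 0 / 2 * q ^ (k + 1) := by
      field_simp
      ring
    calc x (k + 1) ≤ q / 2 * ((x 0 + 2 * D / q) * q ^ k) + D * q ^ k := by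
          grw [h k, ih]
      _ ≤ (x 0 + 2 * D / q) * q ^ (k + 1) := by
          rw [hsplit]
          have : 0 ≤ x 0 / 2 * q ^ (k + 1) := by positivity
          linarith

section Iteration

variable {a b A τ r₀ B : ℝ} {Φ : ℝ → ℝ}

lemma le_along_geometric_radii (hτ₀ : 0 < τ) (hτ₁ : τ < 1) (hτ : A * τ ^ a ≤ τ ^ b / 2)
    (hr₀ : 0 < r₀) (hB : 0 ≤ B) (hΦ₀ : ∀ r ∈ Ioc 0 r₀, 0 ≤ Φ r)
    (hdecay : ∀ ρ r, 0 < ρ → ρ < r → r ≤ r₀ → Φ ρ ≤ A * (ρ / r) ^ a * Φ r + B * r ^ b)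
    (k : ℕ) :
    Φ (τ ^ k * r₀) ≤ (Φ r₀ + 2 * (B * r₀ ^ b) / τ ^ b) * (τ ^ b) ^ k := by
  have hmem : ∀ k : ℕ, τ ^ k * r₀ ∈ Ioc 0 r₀ := fun k =>
    ⟨by positivity, mul_le_of_le_one_left hr₀.le (pow_le_one₀ hτ₀.le hτ₁.le)⟩
  have hstep : ∀ k : ℕ, Φ (τ ^ (k + 1) * r₀)
      ≤ τ ^ b / 2 * Φ (τ ^ k * r₀) + B * r₀ ^ b * (τ ^ b) ^ k := by
    intro k
    have hlt : τ ^ (k + 1) * r₀ < τ ^ k * r₀ :=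
      mul_lt_mul_of_pos_right (pow_lt_pow_right_of_lt_one₀ hτ₀ hτ₁ k.lt_succ_self) hr₀
    have hratio : τ ^ (k + 1) * r₀ / (τ ^ k * r₀) = τ := by
      field_simp
      ring
    have hscale : (τ ^ k * r₀) ^ b = (τ ^ b) ^ k * r₀ ^ b := by
      rw [mul_rpow (by positivity) hr₀.le, rpow_pow_comm hτ₀.le]
    calc Φ (τ ^ (k + 1) * r₀)
        ≤ A * τ ^ a * Φ (τ ^ k * r₀) + B * ((τ ^ b) ^ k * r₀ ^ b) := by
          simpa only [hratio, hscale] using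
            hdecay _ _ (hmem (k + 1)).1 hlt (hmem k).2
      _ ≤ τ ^ b / 2 * Φ (τ ^ k * r₀) + B * r₀ ^ b * (τ ^ b) ^ k := by
          linarith [mul_le_mul_of_nonneg_right hτ (hΦ₀ _ (hmem k))]
  simpa using le_mul_pow_of_le_half_mul_add (x := fun k => Φ (τ ^ k * r₀))
    (rpow_pos_of_pos hτ₀ b) (by simpa using hΦ₀ r₀ ⟨hr₀, le_rfl⟩) (by positivity) hstep k

lemma le_rpow_mul_of_decay (hb : 0 < b) (hτ₀ : 0 < τ) (hτ₁ : τ < 1)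
    (hτ : A * τ ^ a ≤ τ ^ b / 2) (hr₀ : 0 < r₀) (hB : 0 ≤ B) (hΦ₀ : ∀ r ∈ Ioc 0 r₀, 0 ≤ Φ r)
    (hmono : ∀ r ∈ Ioc 0 r₀, ∀ s ∈ Ioc 0 r₀, r ≤ s → Φ r ≤ Φ s)
    (hdecay : ∀ ρ r, 0 < ρ → ρ < r → r ≤ r₀ → Φ ρ ≤ A * (ρ / r) ^ a * Φ r + B * r ^ b)
    {r : ℝ} (hr : r ∈ Ioc 0 r₀) :
    Φ r ≤ 2 / (τ ^ b) ^ 2 * r ^ b * (r₀ ^ (-b) * Φ r₀ + B) := by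
  set u := τ ^ b
  have hu₀ : 0 < u := rpow_pos_of_pos hτ₀ b
  have hu₁ : u ≤ 1 := rpow_le_one hτ₀.le hτ₁.le hb.le
  obtain ⟨k, hk_lt, hk_le⟩ := exists_nat_pow_near_of_lt_one (div_pos hr.1 hr₀)
    ((div_le_one hr₀).2 hr.2) hτ₀ hτ₁
  have hrk : r ≤ τ ^ k * r₀ := (div_le_iff₀ hr₀).1 hk_le
  have hpow : u ^ (k + 1) ≤ (r / r₀) ^ b := by
    rw [rpow_pow_comm hτ₀.le]
    exact rpow_le_rpow (by positivity) hk_lt.le hb.le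
  have hΦr₀ : 0 ≤ Φ r₀ := hΦ₀ r₀ ⟨hr₀, le_rfl⟩
  set X := r₀ ^ (-b) * Φ r₀
  set M := Φ r₀ + 2 * (B * r₀ ^ b) / u
  have hrk₀ : τ ^ k * r₀ ≤ r₀ := mul_le_of_le_one_left hr₀.le (pow_le_one₀ hτ₀.le hτ₁.le)
  calc Φ r ≤ Φ (τ ^ k * r₀) := hmono r hr _ ⟨by positivity, hrk₀⟩ hrk
    _ ≤ M * u ^ k := le_along_geometric_radii hτ₀ hτ₁ hτ hr₀ hB hΦ₀ hdecay k
    _ = M * u ^ (k + 1) / u := by field_simp; ring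
    _ ≤ M * (r / r₀) ^ b / u := by gcongr
    _ = r ^ b * (X / u + 2 * B / u ^ 2) := by
        have : r₀ ^ b ≠ 0 := (rpow_pos_of_pos hr₀ b).ne'
        simp only [M, X, div_rpow hr.1.le hr₀.le, rpow_neg hr₀.le]
        field_simp
    _ ≤ 2 / u ^ 2 * r ^ b * (X + B) := by
        have hgap : 2 / u ^ 2 * r ^ b * (X + B) - r ^ b * (X / u + 2 * B / u ^ 2)
            = r ^ b * X * (2 - u) / u ^ 2 := by
          field_simp
          ring
        have : 0 ≤ r ^ b * X * (2 - u) / u ^ 2 := by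
          have : 0 ≤ 2 - u := by linarith
          have : 0 ≤ X := by positivity
          have := rpow_nonneg hr.1.le b
          positivity
        linarith

end Iteration

theorem statement_0_general (a b A : ℝ) (hb : 0 < b) (hba : b < a) :
    ∃ C : ℝ, 0 < C ∧
      ∀ r₀ : ℝ, 0 < r₀ → ∀ B : ℝ, 0 ≤ B → ∀ Φ : ℝ → ℝ,
        (∀ r ∈ Set.Ioc (0 : ℝ) r₀, 0 ≤ Φ r) →
        (∀ r ∈ Set.Ioc (0 : ℝ) r₀, ∀ s ∈ Set.Ioc (0 : ℝ) r₀, r ≤ s → Φ r ≤ Φ s) →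
        (∀ ρ r : ℝ, 0 < ρ → ρ < r → r ≤ r₀ →
          Φ ρ ≤ A * (ρ / r) ^ a * Φ r + B * r ^ b) →
        ∀ r ∈ Set.Ioo (0 : ℝ) r₀, Φ r ≤ C * r ^ b * (r₀ ^ (-b) * Φ r₀ + B) := by
  obtain ⟨τ, hτ₀, hτ₁, hτ⟩ := exists_pos_lt_one_mul_rpow_le A (sub_pos.2 hba) one_half_pos
  have hτ' : A * τ ^ a ≤ τ ^ b / 2 := by
    calc A * τ ^ a = A * τ ^ (a - b) * τ ^ b := by
          rw [mul_assoc, ← rpow_add hτ₀, sub_add_cancel]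
      _ ≤ 1 / 2 * τ ^ b := by gcongr
      _ = τ ^ b / 2 := by ring
  refine ⟨2 / (τ ^ b) ^ 2, by positivity, fun r₀ hr₀ B hB Φ hΦ₀ hmono hdecay r hr => ?_⟩
  exact le_rpow_mul_of_decay hb hτ₀ hτ₁ hτ' hr₀ hB hΦ₀ hmono hdecay ⟨hr.1, hr.2.le⟩

/-- Let `0 < b < a` and `A ≥ 0`. There exists a constant `C = C(A,a,b)`
such that for every `r₀ > 0`, every `B ≥ 0` and every nonnegative nondecreasing function
`Φ` on `(0, r₀]` satisfying `Φ(ρ) ≤ A (ρ/r)^a Φ(r) + B r^b` for all `0 < ρ < r ≤ r₀`,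
one has `Φ(r) ≤ C r^b (r₀^{-b} Φ(r₀) + B)` for all `r ∈ (0, r₀)`. -/
theorem statement_0 (a b A : ℝ) (hb : 0 < b) (hba : b < a) (hA : 0 ≤ A) :
    ∃ C : ℝ, 0 < C ∧
      ∀ r₀ : ℝ, 0 < r₀ → ∀ B : ℝ, 0 ≤ B → ∀ Φ : ℝ → ℝ,
        (∀ r ∈ Set.Ioc (0 : ℝ) r₀, 0 ≤ Φ r) →
        (∀ r ∈ Set.Ioc (0 : ℝ) r₀, ∀ s ∈ Set.Ioc (0 : ℝ) r₀, r ≤ s → Φ r ≤ Φ s) →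
        (∀ ρ r : ℝ, 0 < ρ → ρ < r → r ≤ r₀ →
          Φ ρ ≤ A * (ρ / r) ^ a * Φ r + B * r ^ b) →
        ∀ r ∈ Set.Ioo (0 : ℝ) r₀, Φ r ≤ C * r ^ b * (r₀ ^ (-b) * Φ r₀ + B) :=
  statement_0_general a b A hb hba
end

section
/- Let Ω be a nonempty bounded open subset of ℝ^d and m ≥ 1 an integer. Then there exists a smooth function ξ with compact support in Ω such that ∫_Ω ξ(y) dy = 1 and ∫_Ω ξ(y) y^α dy = 0 for every multi-index α with 1 ≤ |α| ≤ m. -/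
open MeasureTheory Metric Set Topology

noncomputable section

/-- The parabolic cylinder `Q_r(t₀,x₀) = (t₀ - r^{2m}, t₀) × B_r(x₀)`. -/
def QCyl (d m : ℕ) (r : ℝ) (X : ℝ × EuclideanSpace ℝ (Fin d)) :
    Set (ℝ × EuclideanSpace ℝ (Fin d)) :=
  Set.Ioo (X.1 - r ^ (2 * m)) X.1 ×ˢ Metric.ball X.2 r

/-- The upper-half parabolic cylinder, `i` being the index of the normal direction. -/
def QCylP (d m : ℕ) (i : Fin d) (r : ℝ) (X : ℝ × EuclideanSpace ℝ (Fin d)) :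
    Set (ℝ × EuclideanSpace ℝ (Fin d)) :=
  {p ∈ QCyl d m r X | 0 < p.2 i}

/-- Multi-indices of order exactly `k`. -/
def MIdx (d k : ℕ) : Finset (Fin d → ℕ) :=
  (Fintype.piFinset fun _ : Fin d => Finset.range (k + 1)).filter fun γ => ∑ i, γ i = k

/-- Multi-indices of order at most `k`. -/
def MIdxLe (d k : ℕ) : Finset (Fin d → ℕ) :=
  (Fintype.piFinset fun _ : Fin d => Finset.range (k + 1)).filter fun γ => ∑ i, γ i ≤ k

/-- Multi-indices of order strictly less than `k`. -/
def MIdxLt (d k : ℕ) : Finset (Fin d → ℕ) :=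
  (Fintype.piFinset fun _ : Fin d => Finset.range (k + 1)).filter fun γ => ∑ i, γ i < k

variable {d n : ℕ} {F : Type*} [NormedAddCommGroup F] [NormedSpace ℝ F]

/-- Spatial partial derivative in the `i`-th coordinate direction. -/
def pder (i : Fin d) (u : ℝ × EuclideanSpace ℝ (Fin d) → F) :
    ℝ × EuclideanSpace ℝ (Fin d) → F :=
  fun p => fderiv ℝ (fun y => u (p.1, y)) p.2 (EuclideanSpace.single i 1)

/-- Multi-index spatial derivative `D^γ`. -/
def Dmul (γ : Fin d → ℕ) (u : ℝ × EuclideanSpace ℝ (Fin d) → F) :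
    ℝ × EuclideanSpace ℝ (Fin d) → F :=
  (List.finRange d).foldr (fun i v => (pder i)^[γ i] v) u

/-- Time derivative `∂_t`. -/
def tder (u : ℝ × EuclideanSpace ℝ (Fin d) → F) : ℝ × EuclideanSpace ℝ (Fin d) → F :=
  fun p => deriv (fun s => u (s, p.2)) p.1

/-- The set of difference quotients entering the spatial Hölder seminorm `[f]*_{a,D}`. -/
def sHolderSet (a : ℝ) (D : Set (ℝ × EuclideanSpace ℝ (Fin d)))
    (f : ℝ × EuclideanSpace ℝ (Fin d) → F) : Set ℝ :=
  {c | ∃ p ∈ D, ∃ q ∈ D, p.1 = q.1 ∧ p.2 ≠ q.2 ∧ c = ‖f p - f q‖ / dist p.2 q.2 ^ a}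

/-- The spatial Hölder seminorm `[f]*_{a,D}`. -/
def sHolder (a : ℝ) (D : Set (ℝ × EuclideanSpace ℝ (Fin d)))
    (f : ℝ × EuclideanSpace ℝ (Fin d) → F) : ℝ :=
  sSup (sHolderSet a D f)

/-- The set of difference quotients entering the parabolic Hölder seminorm `[f]_{σ,a,D}`. -/
def pHolderSet (σ a : ℝ) (D : Set (ℝ × EuclideanSpace ℝ (Fin d)))
    (f : ℝ × EuclideanSpace ℝ (Fin d) → F) : Set ℝ :=
  {c | ∃ p ∈ D, ∃ q ∈ D, p ≠ q ∧ c = ‖f p - f q‖ / (|p.1 - q.1| ^ σ + dist p.2 q.2 ^ a)}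

/-- The parabolic Hölder seminorm `[f]_{σ,a,D}`. -/
def pHolder (σ a : ℝ) (D : Set (ℝ × EuclideanSpace ℝ (Fin d)))
    (f : ℝ × EuclideanSpace ℝ (Fin d) → F) : ℝ :=
  sSup (pHolderSet σ a D f)

/-- The set of difference quotients entering the time Hölder seminorm `⟨f⟩_{σ,D}`. -/
def tHolderSet (σ : ℝ) (D : Set (ℝ × EuclideanSpace ℝ (Fin d)))
    (f : ℝ × EuclideanSpace ℝ (Fin d) → F) : Set ℝ :=
  {c | ∃ p ∈ D, ∃ q ∈ D, p.2 = q.2 ∧ p.1 ≠ q.1 ∧ c = ‖f p - f q‖ / |p.1 - q.1| ^ σ}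

/-- The time Hölder seminorm `⟨f⟩_{σ,D}`. -/
def tHolder (σ : ℝ) (D : Set (ℝ × EuclideanSpace ℝ (Fin d)))
    (f : ℝ × EuclideanSpace ℝ (Fin d) → F) : ℝ :=
  sSup (tHolderSet σ D f)

/-- The `L^∞` norm over a set. -/
def LpInf (D : Set (ℝ × EuclideanSpace ℝ (Fin d)))
    (f : ℝ × EuclideanSpace ℝ (Fin d) → F) : ℝ :=
  (eLpNorm f ⊤ (volume.restrict D)).toReal

/-- The `L²` norm over a set. -/
def L2Norm (D : Set (ℝ × EuclideanSpace ℝ (Fin d)))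
    (f : ℝ × EuclideanSpace ℝ (Fin d) → F) : ℝ :=
  (eLpNorm f 2 (volume.restrict D)).toReal

/-- The Legendre–Hadamard ellipticity condition with constant `lam`. -/
def LegHad (d n m : ℕ) (lam : ℝ)
    (B : (Fin d → ℕ) → (Fin d → ℕ) → Fin n → Fin n → ℝ) : Prop :=
  ∀ (ξ : Fin n → ℝ) (η : Fin d → ℝ),
    lam * (∑ i, ξ i ^ 2) * (∑ k, η k ^ 2) ^ m ≤
      ∑ α ∈ MIdx d m, ∑ β ∈ MIdx d m, ∑ i, ∑ j,
        B α β i j * ξ i * ξ j * ((∏ k, η k ^ α k) * ∏ k, η k ^ β k)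

end


/-!
Take a smooth bump `φ ≥ 0` supported in `Ω` and look for `ξ = φ P` with `P` a polynomial of
degree at most `m`. The moment conditions form a square linear system for the coefficients of `P`,
whose matrix is the Gram matrix of the monomials for the weight `φ`. It is nonsingular because
`∫ φ P² > 0` for every nonzero `P`: a nonzero polynomial cannot vanish on the nonempty open set
`{φ > 0}`.
-/

section WeightedMoments

open scoped Matrix

variable {X ι : Type*} [MeasurableSpace X] [Fintype ι] {μ : Measure X} {w : X → ℝ}
  {f : ι → X → ℝ}

lemma integrable_weighted_combination_mul
    (hint : ∀ i j, Integrable (fun x => w x * f j x * f i x) μ) (c : ι → ℝ) (i : ι) :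
    Integrable (fun x => w x * (∑ j, c j * f j x) * f i x) μ := by
  simp_rw [Finset.mul_sum, Finset.sum_mul]
  exact integrable_finsetSum _ fun j _ => by
    simpa only [mul_comm, mul_left_comm, mul_assoc] using (hint i j).const_mul (c j)

theorem exists_weighted_moments_eq
    (hint : ∀ i j, Integrable (fun x => w x * f j x * f i x) μ)
    (hpos : ∀ c : ι → ℝ, c ≠ 0 → 0 < ∫ x, w x * (∑ j, c j * f j x) ^ 2 ∂μ) (v : ι → ℝ) :
    ∃ c : ι → ℝ, ∀ i, ∫ x, w x * (∑ j, c j * f j x) * f i x ∂μ = v i := by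
  classical
  let G : Matrix ι ι ℝ := fun i j => ∫ x, w x * f j x * f i x ∂μ
  have hG : ∀ c i, (G *ᵥ c) i = ∫ x, w x * (∑ j, c j * f j x) * f i x ∂μ := by
    intro c i
    simp_rw [Matrix.mulVec, dotProduct, G, ← integral_mul_const,
      ← integral_finsetSum _ fun j _ => (hint i j).mul_const (c j), Finset.mul_sum,
      Finset.sum_mul]
    congr 1 with x
    exact Finset.sum_congr rfl fun j _ => by ring
  have hquad : ∀ c, c ⬝ᵥ (G *ᵥ c) = ∫ x, w x * (∑ j, c j * f j x) ^ 2 ∂μ := by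
    intro c
    simp_rw [dotProduct, hG, ← integral_const_mul, ← integral_finsetSum _ fun i _ =>
      (integrable_weighted_combination_mul hint c i).const_mul (c i)]
    congr 1 with x
    rw [sq, ← mul_assoc, Finset.mul_sum _ _ (w x * ∑ j, c j * f j x)]
    exact Finset.sum_congr rfl fun i _ => by ring
  have hinj : Function.Injective G.mulVec := by
    rw [← Matrix.coe_mulVecLin, ← LinearMap.ker_eq_bot, LinearMap.ker_eq_bot']
    intro c hc
    by_contra hne
    have hquad_pos := hpos c hne
    rw [← hquad, show G *ᵥ c = 0 from hc, dotProduct_zero] at hquad_pos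
    exact hquad_pos.false
  obtain ⟨c, hc⟩ :=
    Matrix.mulVec_surjective_iff_isUnit.2 (Matrix.mulVec_injective_iff_isUnit.1 hinj) v
  exact ⟨c, fun i => (hG c i).symm.trans (congrFun hc i)⟩

end WeightedMoments

theorem MvPolynomial.eq_zero_of_eval_eq_zero_of_isOpen {σ : Type*} [Fintype σ]
    {p : MvPolynomial σ ℝ} {U : Set (σ → ℝ)} (hU : IsOpen U) (hne : U.Nonempty)
    (h : ∀ x ∈ U, eval x p = 0) : p = 0 := by
  obtain ⟨x₀, hx₀⟩ := hne
  have hzero : EqOn (fun x => eval x p) 0 univ :=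
    (AnalyticOnNhd.eval_continuousLinearMap (ContinuousLinearMap.id ℝ (σ → ℝ)) p)
      |>.eqOn_zero_of_preconnected_of_eventuallyEq_zero isPreconnected_univ (mem_univ x₀)
        (Filter.eventually_of_mem (hU.mem_nhds hx₀) h)
  exact MvPolynomial.funext fun x => by
    rw [map_zero]
    exact hzero (mem_univ x)

theorem eq_zero_of_sum_mul_prod_pow_eq_zero_of_isOpen {σ : Type*} [Fintype σ]
    (S : Finset (σ → ℕ)) (c : S → ℝ) {U : Set (σ → ℝ)} (hU : IsOpen U) (hne : U.Nonempty)
    (h : ∀ x ∈ U, ∑ γ : S, c γ * ∏ i, x i ^ (γ : σ → ℕ) i = 0) : c = 0 := by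
  classical
  let p : MvPolynomial σ ℝ :=
    ∑ γ : S, MvPolynomial.monomial (Finsupp.equivFunOnFinite.symm γ) (c γ)
  have heval : ∀ x, MvPolynomial.eval x p = ∑ γ : S, c γ * ∏ i, x i ^ (γ : σ → ℕ) i := by
    intro x
    simp [p, MvPolynomial.eval_monomial, Finsupp.prod_fintype]
  have hp : p = 0 :=
    MvPolynomial.eq_zero_of_eval_eq_zero_of_isOpen hU hne fun x hx => (heval x).trans (h x hx)
  funext γ
  simpa [p, MvPolynomial.coeff_sum, MvPolynomial.coeff_monomial] using
    congrArg (MvPolynomial.coeff (Finsupp.equivFunOnFinite.symm γ)) hp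

theorem exists_contDiff_tsupport_subset_moments_eq {ι : Type*} [Fintype ι]
    {U : Set (EuclideanSpace ℝ ι)} (hU : IsOpen U) (hne : U.Nonempty) (S : Finset (ι → ℕ))
    (v : (ι → ℕ) → ℝ) :
    ∃ ξ : EuclideanSpace ℝ ι → ℝ, ContDiff ℝ (⊤ : ℕ∞) ξ ∧ HasCompactSupport ξ ∧
      tsupport ξ ⊆ U ∧ ∀ γ ∈ S, ∫ y, ξ y * ∏ i, y i ^ γ i = v γ := by
  obtain ⟨x₀, hx₀⟩ := hne
  obtain ⟨φ, hφU, hφc, hφ, hφrange, hφx₀⟩ :=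
    exists_contDiff_tsupport_subset (n := ⊤) (hU.mem_nhds hx₀)
  have hφnn : ∀ y, 0 ≤ φ y := fun y => (hφrange ⟨y, rfl⟩).1
  let mono : S → EuclideanSpace ℝ ι → ℝ := fun γ y => ∏ i, y i ^ (γ : ι → ℕ) i
  have hint : ∀ γ δ, Integrable (fun y => φ y * mono δ y * mono γ y) :=
    fun γ δ => Continuous.integrable_of_hasCompactSupport (by fun_prop) hφc.mul_right.mul_right
  have hpos : ∀ c : S → ℝ, c ≠ 0 → 0 < ∫ y, φ y * (∑ γ, c γ * mono γ y) ^ 2 := by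
    intro c hc
    obtain ⟨y, hyφ, hy⟩ : ∃ y, 0 < φ y ∧ ∑ γ, c γ * mono γ y ≠ 0 := by
      by_contra! H
      exact hc (eq_zero_of_sum_mul_prod_pow_eq_zero_of_isOpen S c
        ((hφ.continuous.comp (PiLp.continuous_toLp 2 _)).isOpen_preimage _ isOpen_Ioi)
        ⟨x₀.ofLp, by simp [hφx₀]⟩ fun x hx => H (WithLp.toLp 2 x) hx)
    exact Continuous.integral_pos_of_hasCompactSupport_nonneg_nonzero (by fun_prop)
      hφc.mul_right (fun y => mul_nonneg (hφnn y) (sq_nonneg _))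
      (mul_pos hyφ (pow_two_pos_of_ne_zero hy)).ne'
  obtain ⟨c, hc⟩ := exists_weighted_moments_eq hint hpos (fun γ => v γ)
  exact ⟨fun y => φ y * ∑ γ, c γ * mono γ y, by fun_prop, hφc.mul_right,
    (tsupport_mul_subset_left).trans hφU, fun γ hγ => hc ⟨γ, hγ⟩⟩

lemma mem_MIdxLe {d k : ℕ} {γ : Fin d → ℕ} : γ ∈ MIdxLe d k ↔ ∑ i, γ i ≤ k := by
  refine ⟨fun h => (Finset.mem_filter.1 h).2, fun h => Finset.mem_filter.2 ⟨?_, h⟩⟩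
  exact Fintype.mem_piFinset.2 fun i => Finset.mem_range_succ_iff.2
    ((Finset.single_le_sum (fun j _ => Nat.zero_le (γ j)) (Finset.mem_univ i)).trans h)

theorem statement_3_general (d m : ℕ)
    (Ω : Set (EuclideanSpace ℝ (Fin d))) (hne : Ω.Nonempty) (hop : IsOpen Ω) :
    ∃ ξ : EuclideanSpace ℝ (Fin d) → ℝ,
      ContDiff ℝ (⊤ : ℕ∞) ξ ∧ HasCompactSupport ξ ∧ tsupport ξ ⊆ Ω ∧
      (∫ y in Ω, ξ y) = 1 ∧
      ∀ α : Fin d → ℕ, 1 ≤ ∑ i, α i → ∑ i, α i ≤ m →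
        (∫ y in Ω, ξ y * ∏ i, y i ^ α i) = 0 := by
  obtain ⟨ξ, hξ, hξc, hξΩ, hmom⟩ := exists_contDiff_tsupport_subset_moments_eq hop hne
    (MIdxLe d m) (Pi.single 0 1)
  have hξ0 : ∀ y ∉ Ω, ξ y = 0 := fun y hy =>
    image_eq_zero_of_notMem_tsupport fun h => hy (hξΩ h)
  refine ⟨ξ, hξ, hξc, hξΩ, ?_, fun α hα1 hαm => ?_⟩
  · rw [setIntegral_eq_integral_of_forall_compl_eq_zero hξ0]
    simpa using hmom 0 (mem_MIdxLe.2 (by simp))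
  · have hα0 : α ≠ 0 := by rintro rfl; simp at hα1
    rw [setIntegral_eq_integral_of_forall_compl_eq_zero fun y hy => by rw [hξ0 y hy, zero_mul],
      hmom α (mem_MIdxLe.2 hαm), Pi.single_apply, if_neg hα0]

/-- On a nonempty bounded open set `Ω ⊂ ℝ^d` there is a smooth function
with compact support in `Ω`, unit integral, and vanishing moments up to order `m`. -/
theorem statement_3 (d m : ℕ) (hd : 1 ≤ d) (hm : 1 ≤ m)
    (Ω : Set (EuclideanSpace ℝ (Fin d))) (hne : Ω.Nonempty) (hop : IsOpen Ω)
    (hbd : Bornology.IsBounded Ω) :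
    ∃ ξ : EuclideanSpace ℝ (Fin d) → ℝ,
      ContDiff ℝ (⊤ : ℕ∞) ξ ∧ HasCompactSupport ξ ∧ tsupport ξ ⊆ Ω ∧
      (∫ y in Ω, ξ y) = 1 ∧
      ∀ α : Fin d → ℕ, 1 ≤ ∑ i, α i → ∑ i, α i ≤ m →
        (∫ y in Ω, ξ y * ∏ i, y i ^ α i) = 0 :=
  statement_3_general d m Ω hne hop
end
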